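/- Let S and A be finite nonempty types. Let π, π' : S → A → ℝ be policies, i.e., for every s ∈ S, π(s,·) and π'(s,·) are nonnegative and sum to 1 over A. Let P : S → A → S → ℝ be a transition function, i.e., for every s,a, P(s,a,·) is nonnegative and sums to 1 over S. Define K(s,s') = Σ_{a∈A} π(s,a)·P(s,a,s') and K'(s,s') = Σ_{a∈A} π'(s,a)·P(s,a,s'), and let K^c, K'^c denote their c-fold compositions. Suppose ε ∈ [0,1] and (1/2)·Σ_{a∈A} |π'(s,a) − π(s,a)| ≤ ε for every s ∈ S. Then for every c ≥ 1 and every s ∈ S, Σ_{s'∈S} |K'^c(s,s') − K^c(s,s')| ≤ 2εc. -/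

import Mathlib

open Finset

/-- `kpow K c` is the `c`-fold composition `K^c` of the kernel `K` (for `c ≥ 1`):
`K^1 = K` and `K^{n+1}(s, s'') = ∑ s', K(s, s') * K^n(s', s'')`. -/
noncomputable def kpow {S : Type*} [Fintype S] (K : S → S → ℝ) : ℕ → S → S → ℝ
  | 0 => fun _ _ => 0
  | 1 => K
  | n + 2 => fun s s'' => ∑ s', K s s' * kpow K (n + 1) s' s''

/-!
View kernels as matrices with the `ℓ∞`-operator norm `‖A‖ = max_i ∑_j ‖A i j‖`, so that the
left-hand side is bounded by `‖K'^c - K^c‖`. Stochastic matrices have norm at most `1`, and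
`a^(n+1) - b^(n+1) = a (a^n - b^n) + (a - b) b^n` then gives `‖K'^c - K^c‖ ≤ c ‖K' - K‖`.
Row `s` of `K' - K` is `(π' s - π s) ᵥ* P s`, whose `ℓ¹`-norm is at most `∑_a |π' s a - π s a|`,
since every row of `P s` is a probability vector.
-/

theorem norm_pow_sub_pow_le {R : Type*} [SeminormedRing R] {a b : R}
    (ha : ‖a‖ ≤ 1) (hb : ‖b‖ ≤ 1) (n : ℕ) : ‖a ^ n - b ^ n‖ ≤ n * ‖a - b‖ := by
  induction n with
  | zero => simp
  | succ n ih =>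
    have hbn : ‖(a - b) * b ^ n‖ ≤ ‖a - b‖ := by
      rcases n.eq_zero_or_pos with rfl | hn
      · simp
      · calc ‖(a - b) * b ^ n‖ ≤ ‖a - b‖ * ‖b ^ n‖ := norm_mul_le _ _
          _ ≤ ‖a - b‖ * 1 := by
            gcongr
            exact (norm_pow_le' b hn).trans (pow_le_one₀ (norm_nonneg b) hb)
          _ = ‖a - b‖ := mul_one _
    have han : ‖a * (a ^ n - b ^ n)‖ ≤ n * ‖a - b‖ :=
      (norm_mul_le _ _).trans <| (mul_le_of_le_one_left (norm_nonneg _) ha).trans ih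
    calc ‖a ^ (n + 1) - b ^ (n + 1)‖ = ‖a * (a ^ n - b ^ n) + (a - b) * b ^ n‖ := by
          rw [pow_succ', pow_succ']; noncomm_ring
      _ ≤ n * ‖a - b‖ + ‖a - b‖ := (norm_add_le _ _).trans (add_le_add han hbn)
      _ = (n + 1 : ℕ) * ‖a - b‖ := by push_cast; ring

attribute [local instance] Matrix.linftyOpSeminormedAddCommGroup Matrix.linftyOpSemiNormedRing

namespace Matrix

section LinftyOpNorm

variable {m n α : Type*} [Fintype m] [Fintype n] [SeminormedAddCommGroup α]

theorem sum_norm_le_linfty_opNorm (A : Matrix m n α) (i : m) : ∑ j, ‖A i j‖ ≤ ‖A‖ := by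
  rw [linfty_opNorm_def]
  simpa only [NNReal.coe_sum, coe_nnnorm] using
    NNReal.coe_le_coe.2 (Finset.le_sup (f := fun i => ∑ j, ‖A i j‖₊) (mem_univ i))

theorem linfty_opNorm_le_of_sum_norm_le [Nonempty m] {A : Matrix m n α} {r : ℝ}
    (h : ∀ i, ∑ j, ‖A i j‖ ≤ r) : ‖A‖ ≤ r := by
  have hr : 0 ≤ r :=
    (sum_nonneg fun j _ => norm_nonneg _).trans (h (Classical.arbitrary m))
  lift r to NNReal using hr
  rw [linfty_opNorm_def, NNReal.coe_le_coe]
  refine Finset.sup_le fun i _ => ?_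
  rw [← NNReal.coe_le_coe, NNReal.coe_sum]
  exact h i

end LinftyOpNorm

theorem linfty_opNorm_le_one_of_mem_rowStochastic {n : Type*} [Fintype n] [DecidableEq n]
    {M : Matrix n n ℝ} (hM : M ∈ rowStochastic ℝ n) : ‖M‖ ≤ 1 := by
  have hrow (i : n) : ∑ j, ‖M i j‖₊ = 1 := NNReal.eq <| by
    push_cast
    simp_rw [Real.norm_of_nonneg (nonneg_of_mem_rowStochastic hM)]
    exact sum_row_of_mem_rowStochastic hM i
  rw [linfty_opNorm_def]
  exact_mod_cast Finset.sup_le fun i _ => (hrow i).le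

theorem sum_abs_vecMul_le {m n : Type*} [Fintype m] [Fintype n] (v : m → ℝ)
    {Q : Matrix m n ℝ} (hQ : ∀ i j, 0 ≤ Q i j) (hQ1 : ∀ i, ∑ j, Q i j = 1) :
    ∑ j, |(v ᵥ* Q) j| ≤ ∑ i, |v i| :=
  calc ∑ j, |(v ᵥ* Q) j| ≤ ∑ j, ∑ i, |v i| * Q i j := by
        gcongr with j
        refine (abs_sum_le_sum_abs _ _).trans_eq (sum_congr rfl fun i _ => ?_)
        rw [abs_mul, abs_of_nonneg (hQ i j)]
    _ = ∑ i, |v i| := by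
        rw [sum_comm]
        simp_rw [← mul_sum, hQ1, mul_one]

theorem mem_rowStochastic_of_eq_sum_mul {S A : Type*} [Fintype S] [DecidableEq S] [Fintype A]
    {π : S → A → ℝ} (hπ_nonneg : ∀ s a, 0 ≤ π s a) (hπ_sum : ∀ s, ∑ a, π s a = 1)
    {P : S → A → S → ℝ} (hP_nonneg : ∀ s a s', 0 ≤ P s a s')
    (hP_sum : ∀ s a, ∑ s', P s a s' = 1)
    {K : Matrix S S ℝ} (hK : ∀ s s', K s s' = ∑ a, π s a * P s a s') :
    K ∈ rowStochastic ℝ S := by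
  refine mem_rowStochastic_iff_sum.2 ⟨fun s s' => ?_, fun s => ?_⟩
  · rw [hK]
    exact sum_nonneg fun a _ => mul_nonneg (hπ_nonneg s a) (hP_nonneg s a s')
  · simp_rw [hK]
    rw [sum_comm]
    simp_rw [← mul_sum, hP_sum, mul_one, hπ_sum]

end Matrix

theorem kpow_eq_pow {S : Type*} [Fintype S] [DecidableEq S] (K : S → S → ℝ) :
    ∀ c, 1 ≤ c → kpow K c = Matrix.of K ^ c
  | 1, _ => (pow_one (Matrix.of K)).symm
  | n + 2, _ => by
    ext s s''
    rw [pow_succ', Matrix.mul_apply, ← kpow_eq_pow K (n + 1) (Nat.le_add_left 1 n)]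
    rfl

open Matrix in
theorem abstracted_transition_tv_bound_general
    {S A : Type*} [Fintype S] [Fintype A]
    (π π' : S → A → ℝ)
    (hπ_nonneg : ∀ s a, 0 ≤ π s a) (hπ_sum : ∀ s, ∑ a, π s a = 1)
    (hπ'_nonneg : ∀ s a, 0 ≤ π' s a) (hπ'_sum : ∀ s, ∑ a, π' s a = 1)
    (P : S → A → S → ℝ)
    (hP_nonneg : ∀ s a s', 0 ≤ P s a s') (hP_sum : ∀ s a, ∑ s', P s a s' = 1)
    (K K' : S → S → ℝ)
    (hK : ∀ s s', K s s' = ∑ a, π s a * P s a s')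
    (hK' : ∀ s s', K' s s' = ∑ a, π' s a * P s a s')
    (ε : ℝ)
    (hclose : ∀ s, (1 / 2) * ∑ a, |π' s a - π s a| ≤ ε) :
    ∀ c : ℕ, 1 ≤ c → ∀ s : S,
      ∑ s', |kpow K' c s s' - kpow K c s s'| ≤ 2 * ε * c := by
  classical
  intro c hc s
  have : Nonempty S := ⟨s⟩
  have hKs := mem_rowStochastic_of_eq_sum_mul (K := of K) hπ_nonneg hπ_sum hP_nonneg hP_sum hK
  have hK's := mem_rowStochastic_of_eq_sum_mul (K := of K') hπ'_nonneg hπ'_sum hP_nonneg hP_sum hK'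
  have hnorm_sub : ‖of K' - of K‖ ≤ 2 * ε := by
    refine linfty_opNorm_le_of_sum_norm_le fun s => ?_
    have hrow (s' : S) : (of K' - of K) s s' = ((π' s - π s) ᵥ* P s) s' := by
      simp only [Matrix.sub_apply, of_apply, hK, hK', vecMul, dotProduct, Pi.sub_apply, sub_mul,
        sum_sub_distrib]
    calc ∑ s', ‖(of K' - of K) s s'‖ = ∑ s', |((π' s - π s) ᵥ* P s) s'| := by
          simp_rw [hrow, Real.norm_eq_abs]
      _ ≤ ∑ a, |π' s a - π s a| := sum_abs_vecMul_le _ (hP_nonneg s) (hP_sum s)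
      _ ≤ 2 * ε := by linarith [hclose s]
  calc ∑ s', |kpow K' c s s' - kpow K c s s'| = ∑ s', ‖(of K' ^ c - of K ^ c) s s'‖ := by
        simp_rw [kpow_eq_pow _ c hc, Real.norm_eq_abs, Matrix.sub_apply]
    _ ≤ ‖of K' ^ c - of K ^ c‖ := sum_norm_le_linfty_opNorm _ s
    _ ≤ c * ‖of K' - of K‖ := norm_pow_sub_pow_le
        (linfty_opNorm_le_one_of_mem_rowStochastic hK's)
        (linfty_opNorm_le_one_of_mem_rowStochastic hKs) c
    _ ≤ c * (2 * ε) := mul_le_mul_of_nonneg_left hnorm_sub c.cast_nonneg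
    _ = 2 * ε * c := mul_comm _ _

theorem abstracted_transition_tv_bound
    {S A : Type*} [Fintype S] [Nonempty S] [Fintype A] [Nonempty A]
    (π π' : S → A → ℝ)
    (hπ_nonneg : ∀ s a, 0 ≤ π s a) (hπ_sum : ∀ s, ∑ a, π s a = 1)
    (hπ'_nonneg : ∀ s a, 0 ≤ π' s a) (hπ'_sum : ∀ s, ∑ a, π' s a = 1)
    (P : S → A → S → ℝ)
    (hP_nonneg : ∀ s a s', 0 ≤ P s a s') (hP_sum : ∀ s a, ∑ s', P s a s' = 1)
    (K K' : S → S → ℝ)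
    (hK : ∀ s s', K s s' = ∑ a, π s a * P s a s')
    (hK' : ∀ s s', K' s s' = ∑ a, π' s a * P s a s')
    (ε : ℝ) (hε0 : 0 ≤ ε) (hε1 : ε ≤ 1)
    (hclose : ∀ s, (1 / 2) * ∑ a, |π' s a - π s a| ≤ ε) :
    ∀ c : ℕ, 1 ≤ c → ∀ s : S,
      ∑ s', |kpow K' c s s' - kpow K c s s'| ≤ 2 * ε * c :=
  abstracted_transition_tv_bound_general π π' hπ_nonneg hπ_sum hπ'_nonneg hπ'_sum P hP_nonneg hP_sum
    K K' hK hK' ε hclose
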